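/- Let t ∈ ℕ. If λ and μ are partitions with λ ∼_t μ and λ ≠ μ, then there exist a partition κ of t and natural numbers m ≠ n such that λ = κ^{(m)} and μ = κ^{(n)}. (Part of Theorem 5.6 (Comes–Ostrik): every atypical ∼_t-equivalence class is of the form {κ^{(0)}, κ^{(1)}, κ^{(2)}, …} for some partition κ of t.) -/
import Mathlib


noncomputable section

/-- A partition, encoded as a weakly decreasing, eventually zero function `ℕ → ℕ`
(`lam i` is the `(i+1)`-st part `λ_{i+1}`). -/
def IsPartitionFn (lam : ℕ → ℕ) : Prop :=
  Antitone lam ∧ ∃ N : ℕ, ∀ i : ℕ, N ≤ i → lam i = 0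

/-- The size `|λ| = ∑ λ_i` of a partition. -/
def fnSize (lam : ℕ → ℕ) : ℕ := ∑ᶠ i, lam i

/-- The sequence `s_t(λ) = (t−|λ|, λ_1−1, λ_2−2, …) : ℕ → ℤ`. -/
def seqZ (t : ℤ) (lam : ℕ → ℕ) : ℕ → ℤ
  | 0 => t - (fnSize lam : ℤ)
  | i + 1 => (lam i : ℤ) - ((i : ℤ) + 1)

/-- `λ ∼_t μ` : the sequence `s_t(λ)` is a rearrangement of `s_t(μ)`. -/
def SimZ (t : ℤ) (lam mu : ℕ → ℕ) : Prop :=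
  ∀ v : ℤ, {i : ℕ | seqZ t lam i = v}.ncard = {i : ℕ | seqZ t mu i = v}.ncard

/-- `κ^{(n)} = (κ_1+1, …, κ_n+1, κ_{n+2}, κ_{n+3}, …)`. -/
def addRemove (kap : ℕ → ℕ) (n : ℕ) : ℕ → ℕ := fun i => if i < n then kap i + 1 else kap (i + 1)

lemma strictAnti_eq_of_range_eq {A B : ℕ → ℤ} (hA : StrictAnti A) (hB : StrictAnti B)
    (h : Set.range A = Set.range B) : A = B := by
  have key : ∀ (A B : ℕ → ℤ), StrictAnti A → StrictAnti B → Set.range A = Set.range B →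
      ∀ n, (∀ k < n, A k = B k) → A n ≤ B n := by
    intro A B hA hB h n ih
    obtain ⟨m, hm⟩ : A n ∈ Set.range B := h ▸ Set.mem_range_self n
    rcases lt_or_ge m n with hmn | hmn
    · exfalso
      have h1 : A m = A n := (ih m hmn).trans hm
      exact absurd (hA.injective h1) (Nat.ne_of_lt hmn)
    · calc A n = B m := hm.symm
        _ ≤ B n := hB.antitone hmn
  funext n
  induction n using Nat.strong_induction_on with
  | _ n ih =>
    exact le_antisymm (key A B hA hB h n ih) (key B A hB hA h.symm n fun k hk => (ih k hk).symm)

open Classical in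
lemma fiber_ncard (f : ℕ → ℤ) (hinj : Function.Injective fun i : ℕ => f (i + 1)) (v : ℤ) :
    {i : ℕ | f i = v}.ncard =
      (if f 0 = v then 1 else 0) + (if v ∈ Set.range (fun i : ℕ => f (i + 1)) then 1 else 0) := by
  by_cases h0 : f 0 = v <;> by_cases hr : v ∈ Set.range fun i : ℕ => f (i+1)
  · obtain ⟨j, hj⟩ := hr
    have hset : {i : ℕ | f i = v} = {0, j+1} := by
      ext i
      simp only [Set.mem_setOf_eq, Set.mem_insert_iff, Set.mem_singleton_iff]
      constructor
      · intro hi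
        cases i with
        | zero => exact Or.inl rfl
        | succ k =>
          have : k = j := hinj (show f (k+1) = f (j+1) from hi.trans hj.symm)
          exact Or.inr (by omega)
      · rintro (rfl | rfl)
        · exact h0
        · exact hj
    rw [hset, Set.ncard_pair (by omega), if_pos h0, if_pos ⟨j, hj⟩]
  · have hset : {i : ℕ | f i = v} = {0} := by
      ext i
      simp only [Set.mem_setOf_eq, Set.mem_singleton_iff]
      constructor
      · intro hi
        cases i with
        | zero => rfl
        | succ k => exact absurd ⟨k, hi⟩ hr
      · rintro rfl; exact h0
    rw [hset, Set.ncard_singleton]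
    simp [h0, hr]
  · obtain ⟨j, hj⟩ := hr
    have hset : {i : ℕ | f i = v} = {j+1} := by
      ext i
      simp only [Set.mem_setOf_eq, Set.mem_singleton_iff]
      constructor
      · intro hi
        cases i with
        | zero => exact absurd hi h0
        | succ k =>
          have : k = j := hinj (show f (k+1) = f (j+1) from hi.trans hj.symm)
          omega
      · rintro rfl; exact hj
    rw [hset, Set.ncard_singleton, if_neg h0, if_pos ⟨j, hj⟩]
  · have hset : {i : ℕ | f i = v} = ∅ := by
      ext i
      simp only [Set.mem_setOf_eq, Set.mem_empty_iff_false, iff_false]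
      intro hi
      cases i with
      | zero => exact h0 hi
      | succ k => exact hr ⟨k, hi⟩
    rw [hset, Set.ncard_empty]
    simp [h0, hr]


lemma fnSize_eq_sum (f : ℕ → ℕ) (K : ℕ) (h : ∀ i, K ≤ i → f i = 0) :
    fnSize f = ∑ i ∈ Finset.range K, f i := by
  apply finsum_eq_sum_of_support_subset
  intro i hi
  simp only [Function.mem_support] at hi
  simp only [Finset.coe_range, Set.mem_Iio]
  by_contra hc
  exact hi (h i (by omega))

lemma construct (lam : ℕ → ℕ) (hl : IsPartitionFn lam) (a : ℤ)
    (ha : a ∉ Set.range fun i : ℕ => (lam i : ℤ) - ((i : ℤ) + 1)) :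
    ∃ (n : ℕ) (kap : ℕ → ℕ) (C : ℕ → ℤ),
      IsPartitionFn kap ∧ (fnSize kap : ℤ) = (fnSize lam : ℤ) + a ∧
      lam = addRemove kap n ∧ StrictAnti C ∧
      Set.range C = insert a (Set.range fun i : ℕ => (lam i : ℤ) - ((i : ℤ) + 1)) ∧
      C n = a ∧ ∀ i, (kap i : ℤ) = C i + i := by
  classical
  obtain ⟨hanti, N, hN⟩ := hl
  set A : ℕ → ℤ := fun i => (lam i : ℤ) - ((i : ℤ) + 1) with hAdef
  have hAanti : StrictAnti A := by
    apply strictAnti_nat_of_succ_lt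
    intro i
    have h1 : lam (i+1) ≤ lam i := hanti (Nat.le_succ i)
    simp only [hAdef]
    push_cast
    omega
  have hex : ∃ i, A i < a := by
    refine ⟨N + a.natAbs, ?_⟩
    have h1 : lam (N + a.natAbs) = 0 := hN _ (Nat.le_add_right _ _)
    simp only [hAdef, h1]
    omega
  set n := Nat.find hex with hndef
  have hlt : A n < a := Nat.find_spec hex
  have hgt : ∀ i < n, a < A i := by
    intro i hi
    have h1 : ¬ A i < a := Nat.find_min hex hi
    have h2 : A i ≠ a := fun h => ha ⟨i, h⟩
    omega
  clear_value n
  have hpos : ∀ i < n, 1 ≤ lam i := by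
    intro i hi
    by_contra h
    have h0 : lam i = 0 := by omega
    have h3 : a < (lam i : ℤ) - ((i:ℤ)+1) := hgt i hi
    rw [h0] at h3
    set k := (-a-1).toNat with hkdef
    have hk : (k:ℤ) = -a-1 := Int.toNat_of_nonneg (by omega)
    have hik : i ≤ k := by omega
    have h4 : lam k = 0 := by have := hanti hik; omega
    refine ha ⟨k, ?_⟩
    show (lam k : ℤ) - ((k:ℤ)+1) = a
    rw [h4]
    omega
  set C : ℕ → ℤ := fun i => if i < n then A i else if i = n then a else A (i-1) with hCdef
  have hCn : C n = a := by simp [hCdef]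
  have hClt : ∀ i < n, C i = A i := fun i hi => by simp [hCdef, hi]
  have hCgt : ∀ i, n < i → C i = A (i-1) := fun i hi => by
    simp only [hCdef]
    rw [if_neg (by omega), if_neg (by omega)]
  have hCanti : StrictAnti C := by
    apply strictAnti_nat_of_succ_lt
    intro i
    rcases lt_trichotomy (i+1) n with h | h | h
    · rw [hClt _ h, hClt _ (by omega)]
      exact hAanti (by omega)
    · rw [← h] at hCn
      rw [hCn, hClt i (by omega)]
      exact hgt i (by omega)
    · rcases Nat.lt_or_ge n i with h2 | h2
      · rw [hCgt _ h, hCgt _ h2]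
        exact hAanti (by omega)
      · have hin : i = n := by omega
        rw [hCgt _ h, hin, hCn]
        simpa [hin] using hlt
  have hC0 : ∀ i, 0 ≤ C i + i := by
    intro i
    rcases lt_trichotomy i n with h | h | h
    · have := hpos i h
      have := hgt i h
      rw [hClt i h]
      simp only [hAdef]
      omega
    · rw [h, hCn]
      have : (lam n : ℤ) - ((n:ℤ)+1) < a := hlt
      omega
    · rw [hCgt i h]
      have hcast : ((i-1 : ℕ) : ℤ) = (i:ℤ) - 1 := by omega
      simp only [hAdef, hcast]
      omega
  set kap : ℕ → ℕ := fun i => (C i + i).toNat with hkapdef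
  have hkap : ∀ i, (kap i : ℤ) = C i + i := fun i => Int.toNat_of_nonneg (hC0 i)
  have hkapanti : Antitone kap := by
    apply antitone_nat_of_succ_le
    intro i
    have h1 := hkap i
    have h2 := hkap (i+1)
    have h3 : C (i+1) < C i := hCanti (Nat.lt_succ_self i)
    push_cast at h2
    omega
  have hkap0 : ∀ i, n + N + 1 ≤ i → kap i = 0 := by
    intro i hi
    have h1 : lam (i-1) = 0 := hN _ (by omega)
    have h2 := hkap i
    rw [hCgt i (by omega)] at h2
    simp only [hAdef, h1] at h2
    have hcast : ((i-1 : ℕ) : ℤ) = (i:ℤ) - 1 := by omega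
    rw [hcast] at h2
    omega
  have hAR : lam = addRemove kap n := by
    funext i
    simp only [addRemove]
    rcases Nat.lt_or_ge i n with h | h
    · rw [if_pos h]
      have h1 := hkap i
      rw [hClt i h] at h1
      simp only [hAdef] at h1
      omega
    · rw [if_neg (by omega)]
      have h1 := hkap (i+1)
      rw [hCgt (i+1) (by omega)] at h1
      simp only [hAdef, Nat.add_sub_cancel] at h1
      push_cast at h1
      omega
  refine ⟨n, kap, C, ⟨hkapanti, n + N + 1, hkap0⟩, ?_, hAR, hCanti, ?_, hCn, hkap⟩
  · -- size
    set K := n + N + 1 with hKdef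
    have hlam0 : ∀ i, K ≤ i → lam i = 0 := fun i hi => hN i (by omega)
    have hsL : fnSize lam = ∑ i ∈ Finset.range K, lam i := fnSize_eq_sum lam K hlam0
    have hsK : fnSize kap = ∑ i ∈ Finset.range (K+1), kap i :=
      fnSize_eq_sum kap (K+1) (fun i hi => hkap0 i (by omega))
    have claim : ∀ K', n ≤ K' →
        (∑ i ∈ Finset.range K', lam i) + kap n = (∑ i ∈ Finset.range (K'+1), kap i) + n := by
      intro K' hK'
      induction K' with
      | zero =>
        have hn0 : n = 0 := by omega
        subst hn0
        simp [Finset.sum_range_succ]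
      | succ K'' ih =>
        rcases Nat.lt_or_ge K'' n with h | h
        · have hn : n = K'' + 1 := by omega
          have hstep : ∀ i ∈ Finset.range n, lam i = kap i + 1 := by
            intro i hi
            simp only [Finset.mem_range] at hi
            rw [hAR]
            simp [addRemove, hi]
          rw [← hn]
          rw [Finset.sum_congr rfl hstep, Finset.sum_add_distrib, Finset.sum_const,
            Finset.card_range, smul_eq_mul, mul_one, Finset.sum_range_succ]
          omega
        · have h1 : lam K'' = kap (K''+1) := by
            rw [hAR]
            simp [addRemove, Nat.not_lt.mpr h]
          rw [Finset.sum_range_succ, Finset.sum_range_succ (n := K''+1), h1]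
          have := ih h
          omega
    have hfin := claim K (by omega)
    rw [← hsL, ← hsK] at hfin
    have hkn := hkap n
    rw [hCn] at hkn
    omega
  · -- range C
    ext v
    simp only [Set.mem_range, Set.mem_insert_iff]
    constructor
    · rintro ⟨i, rfl⟩
      rcases lt_trichotomy i n with h | h | h
      · exact Or.inr ⟨i, (hClt i h).symm⟩
      · rw [h, hCn]; exact Or.inl rfl
      · exact Or.inr ⟨i-1, (hCgt i h).symm⟩
    · rintro (rfl | ⟨i, rfl⟩)
      · exact ⟨n, hCn⟩
      · rcases Nat.lt_or_ge i n with h | h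
        · exact ⟨i, hClt i h⟩
        · refine ⟨i+1, ?_⟩
          rw [hCgt (i+1) (by omega), Nat.add_sub_cancel]

lemma partAnti (lam : ℕ → ℕ) (hl : IsPartitionFn lam) :
    StrictAnti (fun i : ℕ => (lam i : ℤ) - ((i : ℤ) + 1)) := by
  apply strictAnti_nat_of_succ_lt
  intro i
  have h1 : lam (i+1) ≤ lam i := hl.1 (Nat.le_succ i)
  push_cast
  omega

/-- For `t ∈ ℕ`: if `λ ∼_t μ` and `λ ≠ μ`, then there are a partition `κ` of `t` and
`m ≠ n` with `λ = κ^{(m)}` and `μ = κ^{(n)}` — every atypical `∼_t`-class has the form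
`{κ^{(0)}, κ^{(1)}, κ^{(2)}, …}`. -/
theorem stmt14 (t : ℕ) (lam mu : ℕ → ℕ) (hl : IsPartitionFn lam) (hm : IsPartitionFn mu)
    (hsim : SimZ (t : ℤ) lam mu) (hne : lam ≠ mu) :
    ∃ kap : ℕ → ℕ, IsPartitionFn kap ∧ fnSize kap = t ∧
      ∃ m n : ℕ, m ≠ n ∧ lam = addRemove kap m ∧ mu = addRemove kap n := by
  classical
  set a : ℤ := (t:ℤ) - (fnSize lam : ℤ) with hadef
  set b : ℤ := (t:ℤ) - (fnSize mu : ℤ) with hbdef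
  set SA : Set ℤ := Set.range fun i : ℕ => (lam i : ℤ) - ((i : ℤ) + 1) with hSAdef
  set SB : Set ℤ := Set.range fun i : ℕ => (mu i : ℤ) - ((i : ℤ) + 1) with hSBdef
  have hAanti := partAnti lam hl
  have hBanti := partAnti mu hm
  have htailA : (fun i : ℕ => seqZ (t:ℤ) lam (i+1)) = fun i : ℕ => (lam i : ℤ) - ((i : ℤ) + 1) := rfl
  have htailB : (fun i : ℕ => seqZ (t:ℤ) mu (i+1)) = fun i : ℕ => (mu i : ℤ) - ((i : ℤ) + 1) := rfl
  have h0A : seqZ (t:ℤ) lam 0 = a := rfl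
  have h0B : seqZ (t:ℤ) mu 0 = b := rfl
  have star : ∀ v : ℤ, (if a = v then 1 else 0) + (if v ∈ SA then 1 else 0) =
      (if b = v then 1 else 0) + (if v ∈ SB then (1:ℕ) else 0) := by
    intro v
    have h1 := fiber_ncard (seqZ (t:ℤ) lam) (by rw [htailA]; exact hAanti.injective) v
    have h2 := fiber_ncard (seqZ (t:ℤ) mu) (by rw [htailB]; exact hBanti.injective) v
    rw [htailA, h0A] at h1
    rw [htailB, h0B] at h2
    rw [← hSAdef] at h1
    rw [← hSBdef] at h2
    rw [← h1, ← h2]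
    exact hsim v
  by_cases hab : a = b
  · exfalso
    apply hne
    have hSS : SA = SB := by
      ext v
      have := star v
      rw [hab] at this
      constructor
      · intro h1
        by_contra h2
        rw [if_pos h1, if_neg h2] at this
        split_ifs at this <;> omega
      · intro h2
        by_contra h1
        rw [if_neg h1, if_pos h2] at this
        split_ifs at this <;> omega
    have : (fun i : ℕ => (lam i : ℤ) - ((i : ℤ) + 1)) =
        (fun i : ℕ => (mu i : ℤ) - ((i : ℤ) + 1)) :=
      strictAnti_eq_of_range_eq hAanti hBanti hSS
    funext i
    have := congrFun this i
    omega
  · have haSB : a ∈ SB ∧ a ∉ SA := by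
      have h := star a
      rw [if_pos rfl, if_neg (show ¬ b = a from fun e => hab e.symm)] at h
      have h1 : a ∉ SA := by
        intro h1
        by_cases h2 : a ∈ SB
        · rw [if_pos h1, if_pos h2] at h; omega
        · rw [if_pos h1, if_neg h2] at h; omega
      refine ⟨?_, h1⟩
      by_cases h2 : a ∈ SB
      · exact h2
      · rw [if_neg h1, if_neg h2] at h; omega
    have hbSA : b ∈ SA ∧ b ∉ SB := by
      have h := star b
      rw [if_pos rfl, if_neg hab] at h
      have h2 : b ∉ SB := by
        intro h2
        by_cases h1 : b ∈ SA
        · rw [if_pos h1, if_pos h2] at h; omega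
        · rw [if_neg h1, if_pos h2] at h; omega
      refine ⟨?_, h2⟩
      by_cases h1 : b ∈ SA
      · exact h1
      · rw [if_neg h1, if_neg h2] at h; omega
    have hM : insert a SA = insert b SB := by
      ext v
      simp only [Set.mem_insert_iff]
      by_cases h1 : v = a
      · subst h1
        simp [haSB.1]
      · by_cases h2 : v = b
        · subst h2
          simp [hbSA.1]
        · have h := star v
          rw [if_neg (show ¬ a = v from fun e => h1 e.symm),
            if_neg (show ¬ b = v from fun e => h2 e.symm)] at h
          simp only [h1, h2, false_or]
          constructor
          · intro h3
            by_contra h4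
            rw [if_pos h3, if_neg h4] at h; omega
          · intro h4
            by_contra h3
            rw [if_neg h3, if_pos h4] at h; omega
    obtain ⟨n, kap, C, hk1, hk2, hk3, hk4, hk5, hk6, hk7⟩ := construct lam hl a haSB.2
    obtain ⟨m, kap', C', hq1, hq2, hq3, hq4, hq5, hq6, hq7⟩ := construct mu hm b hbSA.2
    have hCC : C = C' := by
      apply strictAnti_eq_of_range_eq hk4 hq4
      rw [hk5, hq5, ← hSAdef, ← hSBdef, hM]
    have hkk : kap = kap' := by
      funext i
      have h1 := hk7 i
      have h2 := hq7 i
      rw [hCC] at h1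
      omega
    refine ⟨kap, hk1, ?_, n, m, ?_, hk3, hkk ▸ hq3⟩
    · have : (fnSize kap : ℤ) = (t:ℤ) := by rw [hk2, hadef]; ring
      exact_mod_cast this
    · intro hnm
      apply hab
      rw [← hk6, ← hq6, ← hnm, hCC]
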